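/- In the Drinfeld double U_{β,ξ} = ̂𝔣⁺ ⊗ ̂𝔣⁻ (identifying x∈ ̂𝔣⁺ with x⊗1 and y∈ ̂𝔣⁻ with 1⊗y), the following relations hold for all i,j∈I: K_i'E_j = ⟨j,i⟩^{−1}ξ(i,j)·E_jK_i', J_i'E_j = E_jJ_i', F_jK_i = ⟨i,j⟩·K_iF_j, F_jJ_i = ξ(j,i)·J_iF_j, and E_iF_j − ξ(j,i)^{−1}F_jE_i = δ_{ij}·(K_iJ_i' − J_iK_i')/(v_i − v_i^{−1}). -/

import Mathlib

open scoped TensorProduct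

noncomputable section

/-- A Cartan datum on `I`. -/
structure CartanDatum (I : Type) where
  c : I → I → ℤ
  symm : ∀ i j, c i j = c j i
  pos : ∀ i, 0 < c i i
  even : ∀ i, Even (c i i)
  dvd : ∀ i j, i ≠ j → c i i ∣ 2 * c i j
  nonpos : ∀ i j, i ≠ j → 2 * c i j ≤ 0

namespace CartanDatum

variable {I : Type} (cd : CartanDatum I)

/-- `d i = (i·i)/2`. -/
def d (i : I) : ℤ := cd.c i i / 2

/-- `a i j = 2(i·j)/(i·i)`. -/
def a (i j : I) : ℤ := 2 * cd.c i j / cd.c i i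

/-- Extension of the pairing to `ℕ[I] × ℕ[I]`. -/
def dotN (ν μ : I →₀ ℕ) : ℤ :=
  ν.sum fun i m => μ.sum fun j n => (m : ℤ) * (n : ℤ) * cd.c i j

end CartanDatum

/-- A multiplicative bilinear form `ℕ[I] × ℕ[I] → 𝔽`. -/
structure MultForm (I 𝔽 : Type) [Field 𝔽] where
  f : (I →₀ ℕ) → (I →₀ ℕ) → 𝔽
  add_left : ∀ ν ν' μ, f (ν + ν') μ = f ν μ * f ν' μ
  add_right : ∀ μ ν ν', f μ (ν + ν') = f μ ν * f μ ν'
  ne_zero : ∀ ν μ, f ν μ ≠ 0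

/-- The trivial multiplicative bilinear form, constantly `1`. -/
def trivMF (I 𝔽 : Type) [Field 𝔽] : MultForm I 𝔽 :=
  ⟨fun _ _ => 1, fun _ _ _ => by ring, fun _ _ _ => by ring, fun _ _ => one_ne_zero⟩

variable {I : Type}

/-- The generator `i` of `ℕ[I]`. -/
def δN (i : I) : I →₀ ℕ := Finsupp.single i 1

/-- The model for the free algebra `'𝔣` on the `θ i`. -/
abbrev FA (𝔽 I : Type) [Field 𝔽] := MonoidAlgebra 𝔽 (FreeMonoid I)

/-- The generator `θ i` of `'𝔣`. -/
def θ (𝔽 : Type) [Field 𝔽] {I : Type} (i : I) : FA 𝔽 I :=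
  MonoidAlgebra.of 𝔽 (FreeMonoid I) (FreeMonoid.of i)

/-- The `ℕ[I]`-degree of a word. -/
def wt [DecidableEq I] (w : FreeMonoid I) : I →₀ ℕ :=
  Multiset.toFinsupp (↑(FreeMonoid.toList w))

/-- Homogeneity of degree `ν` in `'𝔣`. -/
def IsHomog {𝔽 : Type} [Field 𝔽] [DecidableEq I] (ν : I →₀ ℕ) (x : FA 𝔽 I) : Prop :=
  ∀ w ∈ Finsupp.support (x.coeff : FreeMonoid I →₀ 𝔽), wt w = ν

/-- The model for `'𝔣 ⊗ '𝔣` (basis: pairs of words). -/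
abbrev TA (𝔽 I : Type) [Field 𝔽] := MonoidAlgebra 𝔽 (FreeMonoid I × FreeMonoid I)

/-- The tensor `x ⊗ y` in the model of `'𝔣 ⊗ '𝔣`. -/
def tmul {𝔽 : Type} [Field 𝔽] (x y : FA 𝔽 I) : TA 𝔽 I :=
  Finsupp.sum (x.coeff : FreeMonoid I →₀ 𝔽) fun w a =>
    Finsupp.sum (y.coeff : FreeMonoid I →₀ 𝔽) fun u b =>
      MonoidAlgebra.ofCoeff (Finsupp.single (w, u) (a * b) : (FreeMonoid I × FreeMonoid I) →₀ 𝔽)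

/-- The twisted multiplication on `'𝔣 ⊗ '𝔣`:
`(x₁⊗x₂)(y₁⊗y₂) = v^{-|y₁|·|x₂|} β(|x₂|,|y₁|) x₁y₁ ⊗ x₂y₂`. -/
def tMul [DecidableEq I] {𝔽 : Type} [Field 𝔽] (cd : CartanDatum I) (v : 𝔽)
    (β : MultForm I 𝔽) (z z' : TA 𝔽 I) : TA 𝔽 I :=
  Finsupp.sum (z.coeff : (FreeMonoid I × FreeMonoid I) →₀ 𝔽) fun p a =>
    Finsupp.sum (z'.coeff : (FreeMonoid I × FreeMonoid I) →₀ 𝔽) fun q b =>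
      MonoidAlgebra.ofCoeff (Finsupp.single (p.1 * q.1, p.2 * q.2)
        (a * b * v ^ (-(cd.dotN (wt q.1) (wt p.2))) * β.f (wt p.2) (wt q.1))
        : (FreeMonoid I × FreeMonoid I) →₀ 𝔽)

/-- The bilinear form on `'𝔣 ⊗ '𝔣` induced by a form `B` on `'𝔣`:
`(x₁⊗x₂, y₁⊗y₂) = α(|x₁|,|x₂|) (x₁,y₁) (x₂,y₂)` for homogeneous `x₁, x₂`. -/
def pairT [DecidableEq I] {𝔽 : Type} [Field 𝔽] (α : MultForm I 𝔽)
    (B : FA 𝔽 I →ₗ[𝔽] FA 𝔽 I →ₗ[𝔽] 𝔽) (z z' : TA 𝔽 I) : 𝔽 :=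
  Finsupp.sum (z.coeff : (FreeMonoid I × FreeMonoid I) →₀ 𝔽) fun p a =>
    Finsupp.sum (z'.coeff : (FreeMonoid I × FreeMonoid I) →₀ 𝔽) fun q b =>
      a * b * α.f (wt p.1) (wt p.2)
        * B (MonoidAlgebra.single p.1 1) (MonoidAlgebra.single q.1 1)
        * B (MonoidAlgebra.single p.2 1) (MonoidAlgebra.single q.2 1)

/-- The quantum integer `[n]_c`. -/
def qnum {𝔽 : Type} [Field 𝔽] (c : 𝔽) (n : ℕ) : 𝔽 :=
  (c ^ (n : ℤ) - c ^ (-(n : ℤ))) / (c - c⁻¹)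

/-- The quantum factorial `[n]_c!`. -/
def qfact {𝔽 : Type} [Field 𝔽] (c : 𝔽) (n : ℕ) : 𝔽 :=
  ∏ k ∈ Finset.range n, qnum c (k + 1)

/-- The divided power `θ_i^{(n)} = θ_i^n / [n]_{v_i}!`. -/
def θdiv [DecidableEq I] {𝔽 : Type} [Field 𝔽] (cd : CartanDatum I) (v : 𝔽)
    (i : I) (n : ℕ) : FA 𝔽 I :=
  (qfact (v ^ cd.d i) n)⁻¹ • (θ 𝔽 i) ^ n

/-- The twisted quantum Serre element
`D_{ij} = Σ_{k+k'=1-a_{ij}} (-1)^k β(i,j)^{-k} θ_i^{(k)} θ_j θ_i^{(k')}`. -/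
def Dij [DecidableEq I] {𝔽 : Type} [Field 𝔽] (cd : CartanDatum I) (v : 𝔽)
    (g : I → I → 𝔽) (i j : I) : FA 𝔽 I :=
  ∑ k ∈ Finset.range ((1 - cd.a i j).toNat + 1),
    ((-1 : 𝔽) ^ k * ((g i j)⁻¹) ^ k) •
      (θdiv cd v i k * θ 𝔽 j * θdiv cd v i ((1 - cd.a i j).toNat - k))

end
noncomputable section

variable {I : Type}

/-- The generator `i` of `ℤ[I]`. -/
def δZ (i : I) : I →₀ ℤ := Finsupp.single i 1

/-- The inclusion `ℕ[I] → ℤ[I]`. -/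
def nz (ν : I →₀ ℕ) : I →₀ ℤ := Finsupp.mapRange (fun n : ℕ => (n : ℤ)) rfl ν

/-- The multiplicative extension to `ℤ[I] × ℤ[I]` of generator values `g : I → I → 𝔽`. -/
def extZ {𝔽 : Type} [Field 𝔽] (g : I → I → 𝔽) (ν μ : I →₀ ℤ) : 𝔽 :=
  ν.prod fun i m => μ.prod fun j n => g i j ^ (m * n)

/-- The form `⟨i,j⟩ = v^{-i·j} β(i,j) ξ(j,i)`, extended multiplicatively to `ℤ[I]`. -/
def ang {𝔽 : Type} [Field 𝔽] (cd : CartanDatum I) (v : 𝔽) (βg ξg : I → I → 𝔽) :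
    (I →₀ ℤ) → (I →₀ ℤ) → 𝔽 :=
  extZ fun i j => v ^ (-(cd.c i j)) * βg i j * ξg j i

/-- The monomial in `F : I → A` associated with a word `w`. -/
def wordProd {A : Type} [Monoid A] (F : I → A) (w : FreeMonoid I) : A :=
  ((FreeMonoid.toList w).map F).prod

/-- `x` is homogeneous of degree `μ` in the subalgebra generated by the image of `F`. -/
def HomogIn (𝔽 : Type) [Field 𝔽] [DecidableEq I] {A : Type} [Ring A] [Algebra 𝔽 A]
    (F : I → A) (μ : I →₀ ℕ) (x : A) : Prop :=
  x ∈ Submodule.span 𝔽 {z | ∃ w, wt w = μ ∧ z = wordProd F w}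

end

/-!
Each relation is the cross relation `y x = Σ φ(x₁, S₋ y₁) x₂ y₂ φ(x₃, y₃)` of the double,
applied to generators. These are grouplike or skew-primitive, so their iterated coproducts
have at most three terms, and most of the resulting pairings vanish: `ε₋` kills `F_i`,
`𝒦_ν` and `𝒥_ν` act diagonally on the monomials `K'_{τ₁} F_w J'_{τ₂}`, and `ⱼ𝒮` kills the
group part. What survives is one scalar times `x y` for the first four relations; for
`E_i F_j` the two extra terms come from `φ(E_i, F_j)` and `φ(E_i, S₋ F_j)`, both multiples
of `δ_{ij}`.
-/

open TensorProduct

section DrinfeldDouble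

variable {R Bp Bm D : Type*} [CommRing R] [Ring Bp] [Algebra R Bp] [Ring Bm] [Algebra R Bm]
  [Ring D] [Algebra R D]

def IsDoubleCrossRelation (Δp : Bp →ₐ[R] Bp ⊗[R] Bp) (Δm : Bm →ₐ[R] Bm ⊗[R] Bm)
    (ψ : Bp →ₗ[R] Bm →ₗ[R] R) (Sm : Bm → Bm) (ip : Bp → D) (im : Bm → D) : Prop :=
  ∀ (x : Bp) (y : Bm) (n m : ℕ) (x₁ x₂ x₃ : Fin n → Bp) (y₁ y₂ y₃ : Fin m → Bm),
    Algebra.TensorProduct.map Δp (AlgHom.id R Bp) (Δp x) = ∑ k, (x₁ k ⊗ₜ[R] x₂ k) ⊗ₜ[R] x₃ k →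
    Algebra.TensorProduct.map Δm (AlgHom.id R Bm) (Δm y) = ∑ l, (y₁ l ⊗ₜ[R] y₂ l) ⊗ₜ[R] y₃ l →
    im y * ip x = ∑ k, ∑ l, (ψ (x₁ k) (Sm (y₁ l)) * ψ (x₃ k) (y₃ l)) • (ip (x₂ k) * im (y₂ l))

theorem iterComul_of_grouplike {B : Type*} [Ring B] [Algebra R B] {Δ : B →ₐ[R] B ⊗[R] B} {g : B}
    (hg : Δ g = g ⊗ₜ g) :
    Algebra.TensorProduct.map Δ (AlgHom.id R B) (Δ g) = ∑ _k : Fin 1, (g ⊗ₜ g) ⊗ₜ g := by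
  simp [hg]

theorem iterComul_of_skewPrimitive {B : Type*} [Ring B] [Algebra R B] {Δ : B →ₐ[R] B ⊗[R] B}
    {x a b : B} (hx : Δ x = x ⊗ₜ a + b ⊗ₜ x) (hb : Δ b = b ⊗ₜ b) :
    Algebra.TensorProduct.map Δ (AlgHom.id R B) (Δ x)
      = ∑ k : Fin 3, (![x, b, b] k ⊗ₜ ![a, x, b] k) ⊗ₜ ![a, a, x] k := by
  simp [hx, hb, Fin.sum_univ_three, add_tmul, add_assoc]

theorem comul_map_eq_tmul {A B : Type*} [Ring A] [Algebra R A] [Ring B] [Algebra R B]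
    {q : A →ₐ[R] B} {Δ : A →ₐ[R] A ⊗[R] A} {ΔB : B →ₐ[R] B ⊗[R] B}
    (hΔ : ∀ x, ΔB (q x) = Algebra.TensorProduct.map q q (Δ x)) {x a b : A} (h : Δ x = a ⊗ₜ b) :
    ΔB (q x) = q a ⊗ₜ q b := by
  rw [hΔ, h, Algebra.TensorProduct.map_tmul]

theorem comul_map_eq_add_tmul {A B : Type*} [Ring A] [Algebra R A] [Ring B] [Algebra R B]
    {q : A →ₐ[R] B} {Δ : A →ₐ[R] A ⊗[R] A} {ΔB : B →ₐ[R] B ⊗[R] B}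
    (hΔ : ∀ x, ΔB (q x) = Algebra.TensorProduct.map q q (Δ x)) {x a b c d : A}
    (h : Δ x = a ⊗ₜ b + c ⊗ₜ d) : ΔB (q x) = q a ⊗ₜ q b + q c ⊗ₜ q d := by
  rw [hΔ, h, map_add, Algebra.TensorProduct.map_tmul, Algebra.TensorProduct.map_tmul]

namespace IsDoubleCrossRelation

variable {Δp : Bp →ₐ[R] Bp ⊗[R] Bp} {Δm : Bm →ₐ[R] Bm ⊗[R] Bm} {ψ : Bp →ₗ[R] Bm →ₗ[R] R}
  {Sm : Bm → Bm} {ip : Bp → D} {im : Bm → D}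

theorem skewPrimitive_grouplike (h : IsDoubleCrossRelation Δp Δm ψ Sm ip im) {x a b : Bp} {g : Bm}
    (hx : Δp x = x ⊗ₜ a + b ⊗ₜ x) (hb : Δp b = b ⊗ₜ b) (hg : Δm g = g ⊗ₜ g)
    (hxSg : ψ x (Sm g) = 0) (hxg : ψ x g = 0) :
    im g * ip x = (ψ b (Sm g) * ψ a g) • (ip x * im g) := by
  simpa [Fin.sum_univ_three, hxSg, hxg] using
    h x g 3 1 _ _ _ (fun _ => g) (fun _ => g) (fun _ => g)
      (iterComul_of_skewPrimitive hx hb) (iterComul_of_grouplike hg)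

theorem grouplike_skewPrimitive (h : IsDoubleCrossRelation Δp Δm ψ Sm ip im) {g : Bp} {y c e : Bm}
    (hg : Δp g = g ⊗ₜ g) (hy : Δm y = c ⊗ₜ y + y ⊗ₜ e) (hc : Δm c = c ⊗ₜ c)
    (hgSy : ψ g (Sm y) = 0) (hgy : ψ g y = 0) :
    im y * ip g = (ψ g (Sm c) * ψ g e) • (ip g * im y) := by
  simpa [Fin.sum_univ_three, hgSy, hgy] using
    h g y 1 3 (fun _ => g) (fun _ => g) (fun _ => g) _ _ _
      (iterComul_of_grouplike hg) (iterComul_of_skewPrimitive (hy.trans (add_comm _ _)) hc)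

theorem skewPrimitive_skewPrimitive (h : IsDoubleCrossRelation Δp Δm ψ Sm ip im)
    {x a b : Bp} {y c e : Bm} (hx : Δp x = x ⊗ₜ a + b ⊗ₜ x) (hb : Δp b = b ⊗ₜ b)
    (hy : Δm y = c ⊗ₜ y + y ⊗ₜ e) (hc : Δm c = c ⊗ₜ c)
    (hxSc : ψ x (Sm c) = 0) (hay : ψ a y = 0) (hbSy : ψ b (Sm y) = 0) (hxe : ψ x e = 0) :
    im y * ip x = (ψ x (Sm y) * ψ a e) • (ip a * im e) + (ψ b (Sm c) * ψ a e) • (ip x * im y)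
      + (ψ b (Sm c) * ψ x y) • (ip b * im c) := by
  have := h x y 3 3 _ _ _ _ _ _ (iterComul_of_skewPrimitive hx hb)
    (iterComul_of_skewPrimitive (hy.trans (add_comm _ _)) hc)
  simp only [Fin.sum_univ_three, Matrix.cons_val_zero, Matrix.cons_val_one, Matrix.cons_val_two,
    Matrix.head_cons, Matrix.tail_cons, hxSc, hay, hbSy, hxe, zero_mul, mul_zero, zero_smul,
    add_zero, zero_add] at this
  rw [this, add_comm]

theorem commutator_skewPrimitive (h : IsDoubleCrossRelation Δp Δm ψ Sm ip im)
    {x a b : Bp} {y c e : Bm} (hx : Δp x = x ⊗ₜ a + b ⊗ₜ x) (hb : Δp b = b ⊗ₜ b)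
    (hy : Δm y = c ⊗ₜ y + y ⊗ₜ e) (hc : Δm c = c ⊗ₜ c)
    (hxSc : ψ x (Sm c) = 0) (hay : ψ a y = 0) (hbSy : ψ b (Sm y) = 0) (hxe : ψ x e = 0)
    (hbSc : ψ b (Sm c) = 1) {u t : R} (hu : u * ψ a e = 1) (hxSy : ψ x (Sm y) = -t)
    (hxy : u * ψ x y = t) :
    ip x * im y - u • (im y * ip x) = t • (ip a * im e - ip b * im c) := by
  rw [h.skewPrimitive_skewPrimitive hx hb hy hc hxSc hay hbSy hxe, hbSc, hxSy]
  match_scalars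
  · linear_combination -hu
  · linear_combination t * hu
  · linear_combination -hxy

end IsDoubleCrossRelation

end DrinfeldDouble

section Weights

variable {I : Type} {𝔽 : Type} [Field 𝔽]

theorem extZ_single_single (g : I → I → 𝔽) (a b : I) (m n : ℤ) :
    extZ g (Finsupp.single a m) (Finsupp.single b n) = g a b ^ (m * n) := by
  simp [extZ, Finsupp.prod_single_index]

theorem extZ_δZ_δZ (g : I → I → 𝔽) (a b : I) : extZ g (δZ a) (δZ b) = g a b := by
  simp [δZ, extZ_single_single]

theorem extZ_neg_δZ_δZ (g : I → I → 𝔽) (a b : I) : extZ g (-δZ a) (δZ b) = (g a b)⁻¹ := by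
  simp [δZ, ← Finsupp.single_neg, extZ_single_single]

theorem extZ_δZ_neg_δZ (g : I → I → 𝔽) (a b : I) : extZ g (δZ a) (-δZ b) = (g a b)⁻¹ := by
  simp [δZ, ← Finsupp.single_neg, extZ_single_single]

theorem extZ_zero_left (g : I → I → 𝔽) (ν : I →₀ ℤ) : extZ g 0 ν = 1 := by
  simp [extZ]

theorem extZ_zero_right (g : I → I → 𝔽) (ν : I →₀ ℤ) : extZ g ν 0 = 1 := by
  simp [extZ, Finsupp.prod]

variable [DecidableEq I]

@[simp]
theorem nz_wt_one : nz (wt (1 : FreeMonoid I)) = 0 := by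
  simp [wt, nz]

@[simp]
theorem nz_wt_of (b : I) : nz (wt (FreeMonoid.of b)) = δZ b := by
  simp [wt, nz, δZ]

end Weights

@[simp]
theorem wordProd_one {I A : Type} [Monoid A] (F : I → A) : wordProd F 1 = 1 := by
  simp [wordProd]

@[simp]
theorem wordProd_of {I A : Type} [Monoid A] (F : I → A) (b : I) :
    wordProd F (FreeMonoid.of b) = F b := by
  simp [wordProd]

section Conjugation

variable {R : Type*} [CommSemiring R]

theorem map_mul_map_neg {G M : Type*} [AddGroup G] [Monoid M] {f : G → M} (h0 : f 0 = 1)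
    (hadd : ∀ a b, f (a + b) = f a * f b) (ν : G) : f ν * f (-ν) = 1 := by
  rw [← hadd, add_neg_cancel, h0]

theorem map_neg_mul_map {G M : Type*} [AddGroup G] [Monoid M] {f : G → M} (h0 : f 0 = 1)
    (hadd : ∀ a b, f (a + b) = f a * f b) (ν : G) : f (-ν) * f ν = 1 := by
  rw [← hadd, neg_add_cancel, h0]

theorem mul_eq_smul_mul_of_mul_eq_smul_mul {A : Type*} [Semiring A] [Algebra R A] {u u' x : A}
    {c : R} (hu : u * u' = 1) (hu' : u' * u = 1) (h : u * x = c • (x * u)) :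
    x * u' = c • (u' * x) :=
  calc x * u' = u' * (u * x) * u' := by rw [← mul_assoc, hu', one_mul]
    _ = c • (u' * x) := by rw [h, mul_smul_comm, smul_mul_assoc, mul_assoc, mul_assoc, hu, mul_one]

theorem map_neg_mul_mul_map_neg {G A : Type*} [AddGroup G] [Semiring A] [Algebra R A] {k j : G → A}
    (hk0 : k 0 = 1) (hkadd : ∀ a b, k (a + b) = k a * k b)
    (hj0 : j 0 = 1) (hjadd : ∀ a b, j (a + b) = j a * j b) (hkj : ∀ a b, k a * j b = j b * k a)
    {ν : G} {y : A} {c : R} (hky : k ν * y = c • (y * k ν)) (hjy : j ν * y = y * j ν) :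
    j (-ν) * y * k (-ν) = c • (k (-ν) * y * j (-ν)) := by
  have hyj : y * j (-ν) = j (-ν) * y := by
    simpa using mul_eq_smul_mul_of_mul_eq_smul_mul (c := (1 : R)) (map_mul_map_neg hj0 hjadd ν)
      (map_neg_mul_map hj0 hjadd ν) (by simpa using hjy)
  rw [← hyj, mul_assoc, ← hkj, ← mul_assoc,
    mul_eq_smul_mul_of_mul_eq_smul_mul (map_mul_map_neg hk0 hkadd ν) (map_neg_mul_map hk0 hkadd ν)
      hky, smul_mul_assoc]

end Conjugation

section MinusSide

variable {I : Type} {𝔽 : Type} [CommSemiring 𝔽] {Am : Type} [Semiring Am] [Algebra 𝔽 Am]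
  {F : I → Am} {K' J' : (I →₀ ℤ) → Am}

theorem apply_K'_eq_zero {D : Am →ₗ[𝔽] Am} (hD0 : ∀ τ₁ τ₂, D (K' τ₁ * J' τ₂) = 0)
    (hJ'0 : J' 0 = 1) (τ : I →₀ ℤ) : D (K' τ) = 0 := by
  simpa [hJ'0] using hD0 τ 0

theorem apply_J'_eq_zero {D : Am →ₗ[𝔽] Am} (hD0 : ∀ τ₁ τ₂, D (K' τ₁ * J' τ₂) = 0)
    (hK'0 : K' 0 = 1) (τ : I →₀ ℤ) : D (J' τ) = 0 := by
  simpa [hK'0] using hD0 0 τ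

variable [DecidableEq I]

-- The common shape of `𝒦_ν` and `𝒥_ν`.
def ScalesMonomials (F : I → Am) (K' J' : (I →₀ ℤ) → Am) (T : Am →ₗ[𝔽] Am)
    (f : (I →₀ ℤ) → 𝔽) : Prop :=
  ∀ τ₁ τ₂ w, T (K' τ₁ * wordProd F w * J' τ₂)
    = (f τ₁ * f (nz (wt w))) • (K' τ₁ * wordProd F w * J' τ₂)

namespace ScalesMonomials

variable {T : Am →ₗ[𝔽] Am} {f : (I →₀ ℤ) → 𝔽}

theorem apply_K' (hT : ScalesMonomials F K' J' T f) (hf0 : f 0 = 1) (hJ'0 : J' 0 = 1)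
    (τ : I →₀ ℤ) : T (K' τ) = f τ • K' τ := by
  simpa [hJ'0, hf0] using hT τ 0 1

theorem apply_J' (hT : ScalesMonomials F K' J' T f) (hf0 : f 0 = 1) (hK'0 : K' 0 = 1)
    (τ : I →₀ ℤ) : T (J' τ) = J' τ := by
  simpa [hK'0, hf0] using hT 0 τ 1

variable {ε : Am →ₐ[𝔽] 𝔽}

theorem counit_apply_K' (hT : ScalesMonomials F K' J' T f) (hf0 : f 0 = 1) (hJ'0 : J' 0 = 1)
    (hεK' : ∀ τ, ε (K' τ) = 1) (τ : I →₀ ℤ) : ε (T (K' τ)) = f τ := by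
  rw [hT.apply_K' hf0 hJ'0, map_smul, hεK', smul_eq_mul, mul_one]

theorem counit_apply_J' (hT : ScalesMonomials F K' J' T f) (hf0 : f 0 = 1) (hK'0 : K' 0 = 1)
    (hεJ' : ∀ τ, ε (J' τ) = 1) (τ : I →₀ ℤ) : ε (T (J' τ)) = 1 := by
  rw [hT.apply_J' hf0 hK'0, hεJ']

theorem counit_apply_K'_F_J' (hT : ScalesMonomials F K' J' T f) {b : I} (hεF : ε (F b) = 0)
    (τ₁ τ₂ : I →₀ ℤ) : ε (T (K' τ₁ * F b * J' τ₂)) = 0 := by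
  simpa [hεF] using congrArg ε (hT τ₁ τ₂ (FreeMonoid.of b))

theorem counit_apply_F (hT : ScalesMonomials F K' J' T f) (hK'0 : K' 0 = 1) (hJ'0 : J' 0 = 1)
    {b : I} (hεF : ε (F b) = 0) : ε (T (F b)) = 0 := by
  simpa [hK'0, hJ'0] using hT.counit_apply_K'_F_J' hεF 0 0

end ScalesMonomials

theorem twistedDerivation_J'_F_K' {D T T' : Am →ₗ[𝔽] Am} {f f' : (I →₀ ℤ) → 𝔽}
    (hD : ∀ x y, D (x * y) = D x * T' y + T x * D y) (hD0 : ∀ τ₁ τ₂, D (K' τ₁ * J' τ₂) = 0)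
    (hT : ScalesMonomials F K' J' T f) (hf0 : f 0 = 1)
    (hT' : ScalesMonomials F K' J' T' f') (hf'0 : f' 0 = 1) (hK'0 : K' 0 = 1) (hJ'0 : J' 0 = 1)
    {b : I} {s : 𝔽} (hDF : D (F b) = s • 1) (τ σ : I →₀ ℤ) :
    D (J' τ * F b * K' σ) = (s * f' σ) • (J' τ * K' σ) := by
  rw [hD, hD, apply_K'_eq_zero hD0 hJ'0, apply_J'_eq_zero hD0 hK'0, hDF, hT.apply_J' hf0 hK'0,
    hT'.apply_K' hf'0 hJ'0]
  simp [smul_smul, mul_comm]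

end MinusSide

theorem drinfeld_double_relations_general
    {I : Type} [DecidableEq I] (cd : CartanDatum I)
    {𝔽 : Type} [Field 𝔽] (v : 𝔽)
    (βg ξg : I → I → 𝔽)
    (hξne : ∀ i j, ξg i j ≠ 0)
    {Ap : Type} [Ring Ap] [Algebra 𝔽 Ap]
    (E : I → Ap) (K Jp : (I →₀ ℤ) → Ap)
    {Am : Type} [Ring Am] [Algebra 𝔽 Am]
    (F : I → Am) (K' J' : (I →₀ ℤ) → Am)
    (hK'0 : K' 0 = 1) (hK'add : ∀ a b, K' (a + b) = K' a * K' b)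
    (hJ'0 : J' 0 = 1) (hJ'add : ∀ a b, J' (a + b) = J' a * J' b)
    (hK'J' : ∀ a b, K' a * J' b = J' b * K' a)
    (hK'F : ∀ i j : I, K' (δZ i) * F j
      = (ang cd v βg ξg (δZ j) (δZ i) * (ξg i j)⁻¹) • (F j * K' (δZ i)))
    (hJ'F : ∀ i j : I, J' (δZ i) * F j = F j * J' (δZ i))
    (cK cJ : (I →₀ ℤ) → (Am →ₗ[𝔽] Am))
    (hcK : ∀ (ν τ₁ τ₂ : I →₀ ℤ) (w : FreeMonoid I),
      cK ν (K' τ₁ * wordProd F w * J' τ₂)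
        = (ang cd v βg ξg ν τ₁ * ang cd v βg ξg ν (nz (wt w))) • (K' τ₁ * wordProd F w * J' τ₂))
    (hcJ : ∀ (ν τ₁ τ₂ : I →₀ ℤ) (w : FreeMonoid I),
      cJ ν (K' τ₁ * wordProd F w * J' τ₂)
        = (extZ ξg τ₁ ν * extZ ξg (nz (wt w)) ν) • (K' τ₁ * wordProd F w * J' τ₂))
    (iS : I → (Am →ₗ[𝔽] Am))
    (hiS0 : ∀ (j : I) (τ₁ τ₂ : I →₀ ℤ), iS j (K' τ₁ * J' τ₂) = 0)
    (hiSF : ∀ j i : I, iS j (F i) = if i = j then ξg i j • (1 : Am) else 0)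
    (hiSmul : ∀ (j : I) (x y : Am), iS j (x * y) = iS j x * cJ (δZ j) y + cK (δZ j) x * iS j y)
    (ρ : Ap →ₗ[𝔽] Module.End 𝔽 Am)
    (hρE : ∀ j : I, ρ (E j) = (v ^ (-(cd.d j)) - v ^ (cd.d j))⁻¹ • iS j)
    (hρK : ∀ i : I, ρ (K (δZ i)) = cK (δZ i))
    (hρJ : ∀ i : I, ρ (Jp (δZ i)) = cJ (δZ i))
    (εm : Am →ₐ[𝔽] 𝔽)
    (hεmF : ∀ i, εm (F i) = 0) (hεmK' : ∀ ν, εm (K' ν) = 1) (hεmJ' : ∀ ν, εm (J' ν) = 1)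
    (Δp : Ap →ₐ[𝔽] (Ap ⊗[𝔽] Ap))
    (hΔpE : ∀ i, Δp (E i) = E i ⊗ₜ[𝔽] Jp (δZ i) + K (δZ i) ⊗ₜ[𝔽] E i)
    (hΔpK : ∀ ν, Δp (K ν) = K ν ⊗ₜ[𝔽] K ν) (hΔpJ : ∀ ν, Δp (Jp ν) = Jp ν ⊗ₜ[𝔽] Jp ν)
    (Δm : Am →ₐ[𝔽] (Am ⊗[𝔽] Am))
    (hΔmF : ∀ i, Δm (F i) = J' (δZ i) ⊗ₜ[𝔽] F i + F i ⊗ₜ[𝔽] K' (δZ i))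
    (hΔmK' : ∀ ν, Δm (K' ν) = K' ν ⊗ₜ[𝔽] K' ν) (hΔmJ' : ∀ ν, Δm (J' ν) = J' ν ⊗ₜ[𝔽] J' ν)
    (Sm : Am ≃ₗ[𝔽] Am)
    (hSmF : ∀ i, Sm (F i) = -(J' (-(δZ i)) * F i * K' (-(δZ i))))
    (hSmK' : ∀ ν, Sm (K' ν) = K' (-ν)) (hSmJ' : ∀ ν, Sm (J' ν) = J' (-ν))
    {Bp : Type} [Ring Bp] [Algebra 𝔽 Bp] (qp : Ap →ₐ[𝔽] Bp)
    {Bm : Type} [Ring Bm] [Algebra 𝔽 Bm] (qm : Am →ₐ[𝔽] Bm)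
    (ΔBp : Bp →ₐ[𝔽] (Bp ⊗[𝔽] Bp))
    (hΔBp : ∀ x, ΔBp (qp x) = Algebra.TensorProduct.map qp qp (Δp x))
    (ΔBm : Bm →ₐ[𝔽] (Bm ⊗[𝔽] Bm))
    (hΔBm : ∀ y, ΔBm (qm y) = Algebra.TensorProduct.map qm qm (Δm y))
    (SBm : Bm ≃ₗ[𝔽] Bm) (hSBm : ∀ y, SBm (qm y) = qm (Sm y))
    {D : Type} [Ring D] [Algebra 𝔽 D] (ip : Bp →ₐ[𝔽] D) (im : Bm →ₐ[𝔽] D)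
    (ψ : Bp →ₗ[𝔽] Bm →ₗ[𝔽] 𝔽) (hψ : ∀ x y, ψ (qp x) (qm y) = εm (ρ x y))
    (hcross : ∀ (x : Bp) (y : Bm) (n m : ℕ) (x₁ x₂ x₃ : Fin n → Bp) (y₁ y₂ y₃ : Fin m → Bm),
      Algebra.TensorProduct.map ΔBp (AlgHom.id 𝔽 Bp) (ΔBp x)
        = ∑ k, (x₁ k ⊗ₜ[𝔽] x₂ k) ⊗ₜ[𝔽] x₃ k →
      Algebra.TensorProduct.map ΔBm (AlgHom.id 𝔽 Bm) (ΔBm y)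
        = ∑ l, (y₁ l ⊗ₜ[𝔽] y₂ l) ⊗ₜ[𝔽] y₃ l →
      im y * ip x = ∑ k, ∑ l,
        (ψ (x₁ k) (SBm (y₁ l)) * ψ (x₃ k) (y₃ l)) • (ip (x₂ k) * im (y₂ l)))
    :
    ∀ i j : I,
      im (qm (K' (δZ i))) * ip (qp (E j))
        = ((ang cd v βg ξg (δZ j) (δZ i))⁻¹ * ξg i j) •
            (ip (qp (E j)) * im (qm (K' (δZ i)))) ∧
      im (qm (J' (δZ i))) * ip (qp (E j)) = ip (qp (E j)) * im (qm (J' (δZ i))) ∧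
      im (qm (F j)) * ip (qp (K (δZ i)))
        = ang cd v βg ξg (δZ i) (δZ j) • (ip (qp (K (δZ i))) * im (qm (F j))) ∧
      im (qm (F j)) * ip (qp (Jp (δZ i)))
        = ξg j i • (ip (qp (Jp (δZ i))) * im (qm (F j))) ∧
      ip (qp (E i)) * im (qm (F j)) - (ξg j i)⁻¹ • (im (qm (F j)) * ip (qp (E i)))
        = if i = j then (v ^ cd.d i - v ^ (-(cd.d i)))⁻¹ •
              (ip (qp (K (δZ i))) * im (qm (J' (δZ i)))
                - ip (qp (Jp (δZ i))) * im (qm (K' (δZ i))))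
          else 0 := by
  intro i j
  have hK : ∀ a, ScalesMonomials F K' J' (cK (δZ a)) (ang cd v βg ξg (δZ a)) := fun a => hcK _
  have hJ : ∀ a, ScalesMonomials F K' J' (cJ (δZ a)) (extZ ξg · (δZ a)) := fun a => hcJ _
  have hK1 : ∀ a, ang cd v βg ξg (δZ a) 0 = 1 := fun a => extZ_zero_right _ _
  have hJ1 : ∀ a, extZ ξg 0 (δZ a) = 1 := fun a => extZ_zero_left _ _
  -- the order in which `𝒦` and `𝒥` act diagonally
  have hSF : ∀ b, Sm (F b) = -((ang cd v βg ξg (δZ b) (δZ b) * (ξg b b)⁻¹) •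
      (K' (-δZ b) * F b * J' (-δZ b))) := fun b => by
    rw [hSmF, map_neg_mul_mul_map_neg hK'0 hK'add hJ'0 hJ'add hK'J' (hK'F b b) (hJ'F b b)]
  have hψE : ∀ a y, ψ (qp (E a)) (qm y) = (v ^ (-cd.d a) - v ^ cd.d a)⁻¹ * εm (iS a y) :=
    fun a y => by rw [hψ, hρE, LinearMap.smul_apply, map_smul, smul_eq_mul]
  have hiSF' : iS i (F j) = (if j = i then ξg j i else 0) • 1 := by
    rw [hiSF]; split_ifs <;> simp
  have hψESF : ψ (qp (E i)) (SBm (qm (F j)))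
      = -(if i = j then (v ^ (-cd.d i) - v ^ cd.d i)⁻¹ else 0) := by
    -- in the original order of `S₋ F_j`, the Leibniz rule needs no inverse of `⟨j, j⟩`
    rw [hSBm, hSmF, hψE, map_neg, twistedDerivation_J'_F_K' (hiSmul i) (hiS0 i) (hK i) (hK1 i)
      (hJ i) (hJ1 i) hK'0 hJ'0 hiSF', extZ_neg_δZ_δZ]
    rcases eq_or_ne i j with rfl | hij
    · simp [hξne, hεmJ', hεmK']
    · simp [hij, Ne.symm hij]
  have hψEF : (ξg j i)⁻¹ * ψ (qp (E i)) (qm (F j))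
      = if i = j then (v ^ (-cd.d i) - v ^ cd.d i)⁻¹ else 0 := by
    rw [hψE, hiSF']
    rcases eq_or_ne i j with rfl | hij
    · simp only [↓reduceIte, map_smul, map_one, smul_eq_mul, mul_one]
      rw [mul_left_comm, inv_mul_cancel₀ (hξne i i), mul_one]
    · simp [hij, Ne.symm hij]
  have hdouble : IsDoubleCrossRelation ΔBp ΔBm ψ SBm ip im := hcross
  have hΔE := fun a => comul_map_eq_add_tmul hΔBp (hΔpE a)
  have hΔF := fun b => comul_map_eq_add_tmul hΔBm (hΔmF b)
  have hΔK := fun ν => comul_map_eq_tmul hΔBp (hΔpK ν)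
  have hΔJ' := fun ν => comul_map_eq_tmul hΔBm (hΔmJ' ν)
  refine ⟨(hdouble.skewPrimitive_grouplike (hΔE j) (hΔK _)
      (comul_map_eq_tmul hΔBm (hΔmK' _)) ?_ ?_).trans ?_,
    (hdouble.skewPrimitive_grouplike (hΔE j) (hΔK _) (hΔJ' _) ?_ ?_).trans ?_,
    (hdouble.grouplike_skewPrimitive (hΔK _) (hΔF j) (hΔJ' _) ?_ ?_).trans ?_,
    (hdouble.grouplike_skewPrimitive (comul_map_eq_tmul hΔBp (hΔpJ _)) (hΔF j) (hΔJ' _)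
      ?_ ?_).trans ?_,
    (hdouble.commutator_skewPrimitive (hΔE i) (hΔK _) (hΔF j) (hΔJ' _)
      ?_ ?_ ?_ ?_ ?_ ?_ hψESF hψEF).trans ?ef⟩
  case ef =>
    split_ifs with hij
    · subst hij
      rw [← neg_sub (v ^ (-cd.d i)), inv_neg, neg_smul, ← smul_neg, neg_sub]
    · rw [zero_smul]
  -- The remaining goals are values of `φ` on generators; `hψ` turns them into `ε₋(ρ⁺(x) y)`.
  all_goals simp only [hSBm, hψ, hρE, hρK, hρJ, LinearMap.smul_apply, hSmK', hSmJ', hSF,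
    map_neg, map_smul, apply_K'_eq_zero (hiS0 _) hJ'0, apply_J'_eq_zero (hiS0 _) hK'0, map_zero,
    smul_zero, neg_zero, (hK _).counit_apply_K' (hK1 _) hJ'0 hεmK',
    (hJ _).counit_apply_K' (hJ1 _) hJ'0 hεmK', (hK _).counit_apply_J' (hK1 _) hK'0 hεmJ',
    (hJ _).counit_apply_J' (hJ1 _) hK'0 hεmJ', (hK _).counit_apply_F hK'0 hJ'0 (hεmF _),
    (hJ _).counit_apply_F hK'0 hJ'0 (hεmF _), (hK _).counit_apply_K'_F_J' (hεmF _),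
    (hJ _).counit_apply_K'_F_J' (hεmF _), ang, extZ_δZ_δZ, extZ_δZ_neg_δZ, one_mul, one_smul,
    inv_mul_cancel₀ (hξne _ _)]

theorem drinfeld_double_relations
    {I : Type} [Fintype I] [DecidableEq I] (cd : CartanDatum I)
    {𝔽 : Type} [Field 𝔽] [CharZero 𝔽] (v : 𝔽) (hv : Transcendental ℚ v)
    (βg ξg : I → I → 𝔽)
    (hββ : ∀ i j, βg i j * βg j i = 1) (hβii : ∀ i, βg i i = 1)
    (hξsymm : ∀ i j, ξg i j = ξg j i) (hξne : ∀ i j, ξg i j ≠ 0)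
    {Ap : Type} [Ring Ap] [Algebra 𝔽 Ap]
    (E : I → Ap) (K Jp : (I →₀ ℤ) → Ap)
    (hK0 : K 0 = 1) (hKadd : ∀ a b, K (a + b) = K a * K b)
    (hJ0 : Jp 0 = 1) (hJadd : ∀ a b, Jp (a + b) = Jp a * Jp b)
    (hKJ : ∀ a b, K a * Jp b = Jp b * K a)
    (hKE : ∀ i j : I, K (δZ i) * E j = ang cd v βg ξg (δZ i) (δZ j) • (E j * K (δZ i)))
    (hJE : ∀ i j : I, Jp (δZ i) * E j = ξg j i • (E j * Jp (δZ i)))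
    (bp : Module.Basis ((I →₀ ℤ) × FreeMonoid I × (I →₀ ℤ)) 𝔽 Ap)
    (hbp : ∀ p, bp p = K p.1 * wordProd E p.2.1 * Jp p.2.2)
    {Am : Type} [Ring Am] [Algebra 𝔽 Am]
    (F : I → Am) (K' J' : (I →₀ ℤ) → Am)
    (hK'0 : K' 0 = 1) (hK'add : ∀ a b, K' (a + b) = K' a * K' b)
    (hJ'0 : J' 0 = 1) (hJ'add : ∀ a b, J' (a + b) = J' a * J' b)
    (hK'J' : ∀ a b, K' a * J' b = J' b * K' a)
    (hK'F : ∀ i j : I, K' (δZ i) * F j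
      = (ang cd v βg ξg (δZ j) (δZ i) * (ξg i j)⁻¹) • (F j * K' (δZ i)))
    (hJ'F : ∀ i j : I, J' (δZ i) * F j = F j * J' (δZ i))
    (bm : Module.Basis ((I →₀ ℤ) × FreeMonoid I × (I →₀ ℤ)) 𝔽 Am)
    (hbm : ∀ p, bm p = K' p.1 * wordProd F p.2.1 * J' p.2.2)
    (cK cJ : (I →₀ ℤ) → (Am →ₗ[𝔽] Am))
    (hcK : ∀ (ν τ₁ τ₂ : I →₀ ℤ) (w : FreeMonoid I),
      cK ν (K' τ₁ * wordProd F w * J' τ₂)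
        = (ang cd v βg ξg ν τ₁ * ang cd v βg ξg ν (nz (wt w))) • (K' τ₁ * wordProd F w * J' τ₂))
    (hcJ : ∀ (ν τ₁ τ₂ : I →₀ ℤ) (w : FreeMonoid I),
      cJ ν (K' τ₁ * wordProd F w * J' τ₂)
        = (extZ ξg τ₁ ν * extZ ξg (nz (wt w)) ν) • (K' τ₁ * wordProd F w * J' τ₂))
    (iS : I → (Am →ₗ[𝔽] Am))
    (hiS0 : ∀ (j : I) (τ₁ τ₂ : I →₀ ℤ), iS j (K' τ₁ * J' τ₂) = 0)
    (hiSF : ∀ j i : I, iS j (F i) = if i = j then ξg i j • (1 : Am) else 0)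
    (hiSmul : ∀ (j : I) (x y : Am), iS j (x * y) = iS j x * cJ (δZ j) y + cK (δZ j) x * iS j y)
    (ρ : Ap →ₗ[𝔽] Module.End 𝔽 Am)
    (hρanti : ∀ x y : Ap, ρ (x * y) = ρ y * ρ x) (hρ1 : ρ 1 = 1)
    (hρE : ∀ j : I, ρ (E j) = (v ^ (-(cd.d j)) - v ^ (cd.d j))⁻¹ • iS j)
    (hρK : ∀ i : I, ρ (K (δZ i)) = cK (δZ i))
    (hρKinv : ∀ i : I, ρ (K (-(δZ i))) = cK (-(δZ i)))
    (hρJ : ∀ i : I, ρ (Jp (δZ i)) = cJ (δZ i))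
    (hρJinv : ∀ i : I, ρ (Jp (-(δZ i))) = cJ (-(δZ i)))
    (εm : Am →ₐ[𝔽] 𝔽)
    (hεmF : ∀ i, εm (F i) = 0) (hεmK' : ∀ ν, εm (K' ν) = 1) (hεmJ' : ∀ ν, εm (J' ν) = 1)
    (εp : Ap →ₐ[𝔽] 𝔽)
    (hεpE : ∀ i, εp (E i) = 0) (hεpK : ∀ ν, εp (K ν) = 1) (hεpJ : ∀ ν, εp (Jp ν) = 1)
    (Δp : Ap →ₐ[𝔽] (Ap ⊗[𝔽] Ap))
    (hΔpE : ∀ i, Δp (E i) = E i ⊗ₜ[𝔽] Jp (δZ i) + K (δZ i) ⊗ₜ[𝔽] E i)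
    (hΔpK : ∀ ν, Δp (K ν) = K ν ⊗ₜ[𝔽] K ν) (hΔpJ : ∀ ν, Δp (Jp ν) = Jp ν ⊗ₜ[𝔽] Jp ν)
    (Δm : Am →ₐ[𝔽] (Am ⊗[𝔽] Am))
    (hΔmF : ∀ i, Δm (F i) = J' (δZ i) ⊗ₜ[𝔽] F i + F i ⊗ₜ[𝔽] K' (δZ i))
    (hΔmK' : ∀ ν, Δm (K' ν) = K' ν ⊗ₜ[𝔽] K' ν) (hΔmJ' : ∀ ν, Δm (J' ν) = J' ν ⊗ₜ[𝔽] J' ν)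
    (Sp : Ap →ₗ[𝔽] Ap) (hSp1 : Sp 1 = 1) (hSpanti : ∀ x y, Sp (x * y) = Sp y * Sp x)
    (hSpE : ∀ i, Sp (E i) = -(K (-(δZ i)) * E i * Jp (-(δZ i))))
    (hSpK : ∀ ν, Sp (K ν) = K (-ν)) (hSpJ : ∀ ν, Sp (Jp ν) = Jp (-ν))
    (Sm : Am ≃ₗ[𝔽] Am) (hSm1 : Sm 1 = 1) (hSmanti : ∀ x y, Sm (x * y) = Sm y * Sm x)
    (hSmF : ∀ i, Sm (F i) = -(J' (-(δZ i)) * F i * K' (-(δZ i))))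
    (hSmK' : ∀ ν, Sm (K' ν) = K' (-ν)) (hSmJ' : ∀ ν, Sm (J' ν) = J' (-ν))
    (ιp : FA 𝔽 I →ₐ[𝔽] Ap) (hιp : ∀ i, ιp (θ 𝔽 i) = E i)
    (ιm : FA 𝔽 I →ₗ[𝔽] Am) (hιm1 : ιm 1 = 1)
    (hιmanti : ∀ x y : FA 𝔽 I, ιm (x * y) = ιm y * ιm x)
    (hιmθ : ∀ i, ιm (θ 𝔽 i) = F i)
    {Bp : Type} [Ring Bp] [Algebra 𝔽 Bp] (qp : Ap →ₐ[𝔽] Bp)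
    (hqpsurj : Function.Surjective qp)
    (hqpker : ∀ x, qp x = 0 ↔ x ∈ Submodule.span 𝔽 {z : Ap | ∃ (a b : Ap) (i j : I), i ≠ j ∧ z = a * ιp (Dij cd v βg i j) * b})
    {Bm : Type} [Ring Bm] [Algebra 𝔽 Bm] (qm : Am →ₐ[𝔽] Bm)
    (hqmsurj : Function.Surjective qm)
    (hqmker : ∀ y, qm y = 0 ↔ y ∈ Submodule.span 𝔽 {z : Am | ∃ (a b : Am) (i j : I), i ≠ j ∧ z = a * ιm (Dij cd v βg i j) * b})
    (ΔBp : Bp →ₐ[𝔽] (Bp ⊗[𝔽] Bp))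
    (hΔBp : ∀ x, ΔBp (qp x) = Algebra.TensorProduct.map qp qp (Δp x))
    (εBp : Bp →ₐ[𝔽] 𝔽) (hεBp : ∀ x, εBp (qp x) = εp x)
    (SBp : Bp →ₗ[𝔽] Bp) (hSBp : ∀ x, SBp (qp x) = qp (Sp x))
    (ΔBm : Bm →ₐ[𝔽] (Bm ⊗[𝔽] Bm))
    (hΔBm : ∀ y, ΔBm (qm y) = Algebra.TensorProduct.map qm qm (Δm y))
    (εBm : Bm →ₐ[𝔽] 𝔽) (hεBm : ∀ y, εBm (qm y) = εm y)
    (SBm : Bm ≃ₗ[𝔽] Bm) (hSBm : ∀ y, SBm (qm y) = qm (Sm y))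
    {D : Type} [Ring D] [Algebra 𝔽 D] (ip : Bp →ₐ[𝔽] D) (im : Bm →ₐ[𝔽] D)
    (eD : (Bp ⊗[𝔽] Bm) ≃ₗ[𝔽] D) (heD : ∀ x y, eD (x ⊗ₜ[𝔽] y) = ip x * im y)
    (ψ : Bp →ₗ[𝔽] Bm →ₗ[𝔽] 𝔽) (hψ : ∀ x y, ψ (qp x) (qm y) = εm (ρ x y))
    (hcross : ∀ (x : Bp) (y : Bm) (n m : ℕ) (x₁ x₂ x₃ : Fin n → Bp) (y₁ y₂ y₃ : Fin m → Bm),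
      Algebra.TensorProduct.map ΔBp (AlgHom.id 𝔽 Bp) (ΔBp x)
        = ∑ k, (x₁ k ⊗ₜ[𝔽] x₂ k) ⊗ₜ[𝔽] x₃ k →
      Algebra.TensorProduct.map ΔBm (AlgHom.id 𝔽 Bm) (ΔBm y)
        = ∑ l, (y₁ l ⊗ₜ[𝔽] y₂ l) ⊗ₜ[𝔽] y₃ l →
      im y * ip x = ∑ k, ∑ l,
        (ψ (x₁ k) (SBm (y₁ l)) * ψ (x₃ k) (y₃ l)) • (ip (x₂ k) * im (y₂ l)))
    :
    ∀ i j : I,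
      im (qm (K' (δZ i))) * ip (qp (E j))
        = ((ang cd v βg ξg (δZ j) (δZ i))⁻¹ * ξg i j) •
            (ip (qp (E j)) * im (qm (K' (δZ i)))) ∧
      im (qm (J' (δZ i))) * ip (qp (E j)) = ip (qp (E j)) * im (qm (J' (δZ i))) ∧
      im (qm (F j)) * ip (qp (K (δZ i)))
        = ang cd v βg ξg (δZ i) (δZ j) • (ip (qp (K (δZ i))) * im (qm (F j))) ∧
      im (qm (F j)) * ip (qp (Jp (δZ i)))
        = ξg j i • (ip (qp (Jp (δZ i))) * im (qm (F j))) ∧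
      ip (qp (E i)) * im (qm (F j)) - (ξg j i)⁻¹ • (im (qm (F j)) * ip (qp (E i)))
        = if i = j then (v ^ cd.d i - v ^ (-(cd.d i)))⁻¹ •
              (ip (qp (K (δZ i))) * im (qm (J' (δZ i)))
                - ip (qp (Jp (δZ i))) * im (qm (K' (δZ i))))
          else 0 :=
  drinfeld_double_relations_general cd v βg ξg hξne E K Jp F K' J' hK'0 hK'add hJ'0 hJ'add hK'J'
    hK'F hJ'F cK cJ hcK hcJ iS hiS0 hiSF hiSmul ρ hρE hρK hρJ εm hεmF hεmK' hεmJ' Δp hΔpE hΔpK hΔpJ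
    Δm hΔmF hΔmK' hΔmJ' Sm hSmF hSmK' hSmJ' qp qm ΔBp hΔBp ΔBm hΔBm SBm hSBm ip im ψ hψ hcross
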